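/- With A_m and B_m the automata from the exponential lower-bound construction (A_m the (m+1)-state NFA over Σ_m = {b, a_1, …, a_m}; B_m accepting Σ_m* b), there is no infinite alternating subsequence tower between L(A_m) and L(B_m). -/

import Mathlib

/-- An infinite alternating subsequence tower between `K` and `L`. -/
def InfSubTower {α : Type*} (K L : Set (List α)) (w : ℕ → List α) : Prop :=
  w 0 ∈ K ∪ L ∧
    ∀ i, (w i).Sublist (w (i + 1)) ∧
      (w i ∈ K → w (i + 1) ∈ L) ∧ (w i ∈ L → w (i + 1) ∈ K)

/-- The alphabet `Σ_m = {b, a_1, …, a_m}` is encoded in `ℕ`: the letter `b` is `0`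
and the letter `a_i` is `i` (for `1 ≤ i ≤ m`).  The NFA `A_m` has states
`{0,1,…,m}` (all initial, `0` accepting), `b`-self-loops on states `1,…,m`,
`a_j`-self-loops on states `i > j`, and `a_i`-transitions from `i` to all `j < i`. -/
def expNFA (m : ℕ) : NFA ℕ (Fin (m + 1)) where
  step i c :=
    {j | (c = 0 ∧ 1 ≤ (i : ℕ) ∧ j = i) ∨
      (1 ≤ c ∧ c < (i : ℕ) ∧ j = i) ∨
      (c = (i : ℕ) ∧ 1 ≤ (i : ℕ) ∧ (j : ℕ) < (i : ℕ))}
  start := Set.univ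
  accept := {i | (i : ℕ) = 0}

/-- The language `Σ_m* b` accepted by `B_m`. -/
def endsWithB (m : ℕ) : Set (List ℕ) :=
  {w | (∀ c ∈ w, c ≤ m) ∧ ∃ v, w = v ++ [0]}

/-!
Acceptance of `w` by `A_m` from a state `i ≥ 1` means `w = u a_i v` with all letters of `u`
below `a_i` and `v` accepted from some state `j < i`; in particular no accepted word ends in `b`,
so the two languages are disjoint. Take an infinite tower for `m + 1`. If no word of it contains
`a_{m+1}`, it is already a tower for `m`. Otherwise, from some point on every word contains it;
words of `L(A_{m+1})` contain it exactly once, hence so do the words of `Σ* b` (each is a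
subsequence of the next word), and the suffixes after the first `a_{m+1}` form a tower for `m`.
For `m = 0` the only accepted word is the empty one, so a tower cannot pass from `Σ* b` back.
-/

section afterFirst

variable {α : Type*} [DecidableEq α] {a : α}

def afterFirst (a : α) : List α → List α
  | [] => []
  | c :: w => if c = a then w else afterFirst a w

theorem afterFirst_append_cons {u : List α} (ha : a ∉ u) (v : List α) :
    afterFirst a (u ++ a :: v) = v := by
  induction u with
  | nil => simp [afterFirst]
  | cons c u ih =>
    rw [List.mem_cons, not_or] at ha
    simp [afterFirst, Ne.symm ha.1, ih ha.2]

theorem exists_eq_append_cons_afterFirst {w : List α} (h : a ∈ w) :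
    ∃ u, a ∉ u ∧ w = u ++ a :: afterFirst a w := by
  induction w with
  | nil => simp at h
  | cons c w ih =>
    by_cases hc : c = a
    · subst hc
      exact ⟨[], by simp, by simp [afterFirst]⟩
    · obtain ⟨u, hu, hw⟩ := ih ((List.mem_cons.mp h).resolve_left (Ne.symm hc))
      refine ⟨c :: u, by simp [hu, Ne.symm hc], ?_⟩
      simp only [afterFirst, if_neg hc, List.cons_append, ← hw]

theorem afterFirst_sublist (a : α) (w : List α) : (afterFirst a w).Sublist w := by
  induction w with
  | nil => exact .slnil
  | cons c w ih =>
    simp only [afterFirst]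
    split_ifs
    exacts [List.sublist_cons_self c w, ih.cons c]

theorem List.Sublist.afterFirst {w w' : List α} (h : w.Sublist w') (ha : a ∈ w) :
    (afterFirst a w).Sublist (afterFirst a w') := by
  induction h with
  | slnil => simp at ha
  | cons c h ih =>
    simp only [_root_.afterFirst]
    split_ifs
    exacts [(afterFirst_sublist a _).trans h, ih ha]
  | cons_cons c h ih =>
    simp only [_root_.afterFirst]
    split_ifs with hc
    exacts [h, ih ((List.mem_cons.mp ha).resolve_left (Ne.symm hc))]

end afterFirst

namespace InfSubTower

variable {α : Type*} {K L K' L' : Set (List α)} {t : ℕ → List α}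

theorem sublist_succ (ht : InfSubTower K L t) (i : ℕ) : (t i).Sublist (t (i + 1)) :=
  (ht.2 i).1

theorem succ_mem_right (ht : InfSubTower K L t) {i : ℕ} (h : t i ∈ K) : t (i + 1) ∈ L :=
  (ht.2 i).2.1 h

theorem succ_mem_left (ht : InfSubTower K L t) {i : ℕ} (h : t i ∈ L) : t (i + 1) ∈ K :=
  (ht.2 i).2.2 h

theorem mem_union (ht : InfSubTower K L t) (i : ℕ) : t i ∈ K ∪ L := by
  induction i with
  | zero => exact ht.1
  | succ i ih => exact ih.elim (.inr <| ht.succ_mem_right ·) (.inl <| ht.succ_mem_left ·)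

theorem sublist (ht : InfSubTower K L t) {i j : ℕ} (hij : i ≤ j) : (t i).Sublist (t j) := by
  induction j, hij using Nat.le_induction with
  | base => exact .refl _
  | succ j _ ih => exact ih.trans (ht.sublist_succ j)

theorem comp_add (ht : InfSubTower K L t) (N : ℕ) : InfSubTower K L (fun i => t (N + i)) :=
  ⟨ht.mem_union N, fun i => ht.2 (N + i)⟩

theorem transfer (hdisj : Disjoint K' L') (ht : InfSubTower K L t) {s : ℕ → List α}
    (hs : ∀ i, (s i).Sublist (s (i + 1))) (hK : ∀ i, t i ∈ K → s i ∈ K')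
    (hL : ∀ i, t i ∈ L → s i ∈ L') : InfSubTower K' L' s := by
  refine ⟨(ht.mem_union 0).imp (hK 0) (hL 0), fun i => ⟨hs i, fun h => ?_, fun h => ?_⟩⟩
  · rcases ht.mem_union i with hi | hi
    · exact hL _ (ht.succ_mem_right hi)
    · exact absurd (hL i hi) (Set.disjoint_left.mp hdisj h)
  · rcases ht.mem_union i with hi | hi
    · exact absurd h (Set.disjoint_left.mp hdisj (hK i hi))
    · exact hK _ (ht.succ_mem_left hi)

theorem not_of_subset_nil (hK : ∀ w ∈ K, w = []) (hL : [] ∉ L) : ¬ InfSubTower K L t := by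
  intro ht
  obtain ⟨i, hi⟩ : ∃ i, t i ∈ L :=
    (ht.mem_union 0).elim (fun h => ⟨1, ht.succ_mem_right h⟩) (⟨0, ·⟩)
  have hnil : t (i + 1) = [] := hK _ (ht.succ_mem_left hi)
  exact hL (List.sublist_nil.mp (hnil ▸ ht.sublist_succ i) ▸ hi)

variable [DecidableEq α] {a : α}

theorem afterFirst (hdisj : Disjoint K' L') (ht : InfSubTower K L t) (hmem : ∀ i, a ∈ t i)
    (hK : ∀ w ∈ K, a ∈ w → ∃ u v, w = u ++ a :: v ∧ a ∉ u ∧ a ∉ v ∧ v ∈ K')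
    (hL : ∀ u v, u ++ a :: v ∈ L → a ∉ v → v ∈ L') :
    InfSubTower K' L' (fun i => _root_.afterFirst a (t i)) := by
  refine ht.transfer hdisj (fun i => (ht.sublist_succ i).afterFirst (hmem i)) (fun i h => ?_)
    (fun i h => ?_)
  · obtain ⟨u, v, hw, hu, -, hv⟩ := hK _ h (hmem i)
    rwa [hw, afterFirst_append_cons hu]
  -- `t (i + 1) ∈ K` contains `a` only once, and the part of `t i` after its first `a` embeds
  -- into the part of `t (i + 1)` after its `a`.
  · obtain ⟨u', v', hw', hu', hv', -⟩ := hK _ (ht.succ_mem_left h) (hmem (i + 1))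
    obtain ⟨u, -, hw⟩ := exists_eq_append_cons_afterFirst (hmem i)
    have hsub := (ht.sublist_succ i).afterFirst (hmem i)
    rw [hw', afterFirst_append_cons hu'] at hsub
    exact hL u _ (hw ▸ h) fun ha => hv' (hsub.subset ha)

theorem exists_of_letter (a : α) (hdisj : Disjoint K' L') (ht : InfSubTower K L t)
    (hK_out : ∀ w ∈ K, a ∉ w → w ∈ K') (hL_out : ∀ w ∈ L, a ∉ w → w ∈ L')
    (hK_in : ∀ w ∈ K, a ∈ w → ∃ u v, w = u ++ a :: v ∧ a ∉ u ∧ a ∉ v ∧ v ∈ K')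
    (hL_in : ∀ u v, u ++ a :: v ∈ L → a ∉ v → v ∈ L') :
    ∃ s, InfSubTower K' L' s := by
  by_cases h : ∃ N, a ∈ t N
  · obtain ⟨N, hN⟩ := h
    have hmem (i : ℕ) : a ∈ t (N + i) := (ht.sublist (Nat.le_add_right N i)).subset hN
    exact ⟨_, (ht.comp_add N).afterFirst hdisj hmem hK_in hL_in⟩
  · simp only [not_exists] at h
    exact ⟨t, ht.transfer hdisj ht.sublist_succ (fun i hi => hK_out _ hi (h i))
      (fun i hi => hL_out _ hi (h i))⟩

end InfSubTower

theorem NFA.mem_acceptsFrom_iff_exists {α σ : Type*} {M : NFA α σ} {S : Set σ} {x : List α} :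
    x ∈ M.acceptsFrom S ↔ ∃ s ∈ S, x ∈ M.acceptsFrom {s} := by
  simp only [NFA.mem_acceptsFrom, NFA.mem_evalFrom_iff_exists (S := S)]
  grind

/-- `ExpAcceptsFrom i w`: `A_m` accepts `w` from state `i`. The transitions out of `i` do not
depend on `m`, so neither does this predicate. -/
inductive ExpAcceptsFrom : ℕ → List ℕ → Prop
  | nil : ExpAcceptsFrom 0 []
  | loop {i c : ℕ} {w : List ℕ} : c < i → ExpAcceptsFrom i w → ExpAcceptsFrom i (c :: w)
  | jump {i j : ℕ} {w : List ℕ} : j < i → ExpAcceptsFrom j w → ExpAcceptsFrom i (i :: w)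

namespace ExpAcceptsFrom

variable {i : ℕ} {w : List ℕ}

theorem nil_iff : ExpAcceptsFrom i [] ↔ i = 0 :=
  ⟨fun h => by cases h; rfl, fun h => h ▸ nil⟩

theorem zero_iff : ExpAcceptsFrom 0 w ↔ w = [] := by
  constructor
  · rintro (_ | ⟨hc, _⟩ | ⟨hj, _⟩)
    · rfl
    all_goals omega
  · rintro rfl
    exact .nil

theorem cons_iff {c : ℕ} :
    ExpAcceptsFrom i (c :: w) ↔
      c < i ∧ ExpAcceptsFrom i w ∨ c = i ∧ ∃ j < i, ExpAcceptsFrom j w := by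
  constructor
  · rintro (_ | ⟨hc, h⟩ | ⟨hj, h⟩)
    · exact .inl ⟨hc, h⟩
    · exact .inr ⟨rfl, _, hj, h⟩
  · rintro (⟨hc, h⟩ | ⟨rfl, j, hj, h⟩)
    · exact loop hc h
    · exact jump hj h

theorem le_of_mem (h : ExpAcceptsFrom i w) {c : ℕ} (hc : c ∈ w) : c ≤ i := by
  induction h with
  | nil => simp at hc
  | loop hci _ ih =>
    rcases List.mem_cons.mp hc with rfl | hc
    exacts [hci.le, ih hc]
  | jump hji _ ih =>
    rcases List.mem_cons.mp hc with rfl | hc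
    exacts [le_rfl, (ih hc).trans hji.le]

theorem exists_append_cons (h : ExpAcceptsFrom i w) (hi : i ≠ 0) :
    ∃ u j v, w = u ++ i :: v ∧ (∀ c ∈ u, c < i) ∧ j < i ∧ ExpAcceptsFrom j v := by
  induction h with
  | nil => exact absurd rfl hi
  | @loop i c w hci _ ih =>
    obtain ⟨u, j, v, rfl, hu, hj, hv⟩ := ih hi
    refine ⟨c :: u, j, v, rfl, ?_, hj, hv⟩
    simpa [hci] using hu
  | @jump i j w hji h _ => exact ⟨[], j, w, rfl, by simp, hji, h⟩

theorem getLast?_ne_some_zero (h : ExpAcceptsFrom i w) : w.getLast? ≠ some 0 := by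
  induction h with
  | nil => simp
  | @loop i c w hci h ih =>
    rcases hw : w.getLast? with _ | d
    · rw [List.getLast?_eq_none_iff] at hw
      subst hw
      rw [nil_iff] at h
      omega
    · simp_all [List.getLast?_cons]
  | @jump i j w hji _ ih =>
    cases hw : w.getLast? <;> simp_all [List.getLast?_cons]; omega

end ExpAcceptsFrom

theorem mem_expNFA_step {m c : ℕ} {i j : Fin (m + 1)} :
    j ∈ (expNFA m).step i c ↔ c < i ∧ j = i ∨ c = i ∧ j < i := by
  change _ ∨ _ ∨ _ ↔ _
  rw [Fin.lt_def]
  omega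

theorem mem_expNFA_acceptsFrom_iff {m : ℕ} {i : Fin (m + 1)} {w : List ℕ} :
    w ∈ (expNFA m).acceptsFrom {i} ↔ ExpAcceptsFrom i w := by
  induction w generalizing i with
  | nil =>
    rw [NFA.nil_mem_acceptsFrom, ExpAcceptsFrom.nil_iff]
    exact ⟨fun ⟨_, hs, h⟩ => hs ▸ h, fun h => ⟨i, rfl, h⟩⟩
  | cons c w ih =>
    rw [NFA.cons_mem_acceptsFrom, NFA.stepSet_singleton, NFA.mem_acceptsFrom_iff_exists,
      ExpAcceptsFrom.cons_iff]
    simp only [ih, mem_expNFA_step]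
    constructor
    · rintro ⟨j, ⟨hci, rfl⟩ | ⟨rfl, hji⟩, h⟩
      exacts [.inl ⟨hci, h⟩, .inr ⟨rfl, j, hji, h⟩]
    · rintro (⟨hci, h⟩ | ⟨rfl, j, hji, h⟩)
      · exact ⟨i, .inl ⟨hci, rfl⟩, h⟩
      · exact ⟨⟨j, by omega⟩, .inr ⟨rfl, hji⟩, h⟩

theorem mem_expNFA_accepts_iff {m : ℕ} {w : List ℕ} :
    w ∈ (expNFA m).accepts ↔ ∃ i ≤ m, ExpAcceptsFrom i w := by
  rw [NFA.accepts_eq_acceptsFrom_start, NFA.mem_acceptsFrom_iff_exists]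
  simp only [mem_expNFA_acceptsFrom_iff, Fin.exists_iff, Nat.lt_succ_iff]
  exact ⟨fun ⟨i, hi, _, h⟩ => ⟨i, hi, h⟩, fun ⟨i, hi, h⟩ => ⟨i, hi, Set.mem_univ _, h⟩⟩

section expNFA

variable {m : ℕ} {w : List ℕ}

theorem eq_nil_of_mem_expNFA_zero_accepts (h : w ∈ (expNFA 0).accepts) : w = [] := by
  obtain ⟨i, hi, h⟩ := mem_expNFA_accepts_iff.mp h
  rwa [Nat.le_zero.mp hi, ExpAcceptsFrom.zero_iff] at h

theorem disjoint_expNFA_accepts_endsWithB :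
    Disjoint ((expNFA m).accepts : Set (List ℕ)) (endsWithB m) := by
  refine Set.disjoint_left.mpr fun w hK ⟨_, hL⟩ => ?_
  obtain ⟨i, -, h⟩ := mem_expNFA_accepts_iff.mp hK
  exact h.getLast?_ne_some_zero (List.getLast?_eq_some_iff.mpr hL)

theorem mem_expNFA_accepts_of_succ (h : w ∈ (expNFA (m + 1)).accepts) (hw : m + 1 ∉ w) :
    w ∈ (expNFA m).accepts := by
  obtain ⟨i, hi, h⟩ := mem_expNFA_accepts_iff.mp h
  refine mem_expNFA_accepts_iff.mpr ⟨i, ?_, h⟩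
  rcases hi.lt_or_eq with hi | rfl
  · omega
  · obtain ⟨u, j, v, rfl, -⟩ := h.exists_append_cons (by omega)
    simp at hw

theorem exists_append_cons_of_mem_expNFA_accepts (h : w ∈ (expNFA (m + 1)).accepts)
    (hw : m + 1 ∈ w) :
    ∃ u v, w = u ++ (m + 1) :: v ∧ m + 1 ∉ u ∧ m + 1 ∉ v ∧ v ∈ (expNFA m).accepts := by
  obtain ⟨i, hi, h⟩ := mem_expNFA_accepts_iff.mp h
  obtain rfl : i = m + 1 := le_antisymm hi (h.le_of_mem hw)
  obtain ⟨u, j, v, rfl, hu, hj, hv⟩ := h.exists_append_cons (by omega)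
  refine ⟨u, v, rfl, fun h => (hu _ h).false, fun h => ?_,
    mem_expNFA_accepts_iff.mpr ⟨j, by omega, hv⟩⟩
  have := hv.le_of_mem h
  omega

theorem nil_not_mem_endsWithB : [] ∉ endsWithB m := by
  rintro ⟨-, v, hv⟩
  simp at hv

theorem mem_endsWithB_of_succ (h : w ∈ endsWithB (m + 1)) (hw : m + 1 ∉ w) :
    w ∈ endsWithB m := by
  refine ⟨fun c hc => ?_, h.2⟩
  have := h.1 c hc
  have : c ≠ m + 1 := by rintro rfl; exact hw hc
  omega

theorem mem_endsWithB_of_append_cons {u v : List ℕ} (h : u ++ (m + 1) :: v ∈ endsWithB (m + 1))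
    (hv : m + 1 ∉ v) : v ∈ endsWithB m := by
  refine mem_endsWithB_of_succ ⟨fun c hc => h.1 c (by simp [hc]), ?_⟩ hv
  have hlast := List.getLast?_eq_some_iff.mpr h.2
  rw [List.getLast?_append_cons, List.getLast?_cons] at hlast
  rw [← List.getLast?_eq_some_iff]
  cases hv' : v.getLast? <;> simp_all

end expNFA

theorem no_infinite_tower_exp (m : ℕ) :
    ¬ ∃ t : ℕ → List ℕ,
      InfSubTower ((expNFA m).accepts : Set (List ℕ)) (endsWithB m) t := by
  induction m with
  | zero =>
    rintro ⟨t, ht⟩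
    exact InfSubTower.not_of_subset_nil (fun _ => eq_nil_of_mem_expNFA_zero_accepts)
      nil_not_mem_endsWithB ht
  | succ m ih =>
    rintro ⟨t, ht⟩
    exact ih <| ht.exists_of_letter (m + 1) disjoint_expNFA_accepts_endsWithB
      (fun _ => mem_expNFA_accepts_of_succ) (fun _ => mem_endsWithB_of_succ)
      (fun _ => exists_append_cons_of_mem_expNFA_accepts) (fun _ _ => mem_endsWithB_of_append_cons)
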